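/- For any function g : ℝ → ℝ integrable on [0, π/2], the change of variables ϑ = (π/4)φ + (π/4) gives (1/π) ∫_0^{π/2} g(ϑ) dϑ = (1/4) ∫_{−1}^{1} g( (π/4)φ + (π/4) ) dφ. In particular, for R a real Gaussian with mean μ_R, variance σ_R² > 0 and ς > 0, E[ Q( √(R²/(2ς)) ) ] = (1/4) ∫_{−1}^{1} √( 2ς sin²((π/4)φ + π/4) / (2ς sin²((π/4)φ + π/4) + σ_R²) ) · exp( −μ_R² / (4ς sin²((π/4)φ + π/4) + 2σ_R²) ) dφ. -/

import Mathlib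

/-!
Craig's formula `Q x = (1/π) ∫_0^{π/2} exp (-x²/(2 sin² θ)) dθ` for `x ≥ 0` comes from reading
`Q x` as the mass a standard Gaussian on `ℝ²` puts on the half-plane `{y > x}` and passing to
polar coordinates: the radial integral over `ρ sin θ > x` is `exp (-x²/(2 sin² θ))`.
Substituting it into `E[Q(√(R²/(2ς)))]` and exchanging the integrals (the integrand is bounded
by `1`) leaves the Gaussian expectation of `exp (-R²/a)` with `a = 4ς sin² θ`, which completing
the square evaluates to `√(a/(a + 2σ²)) exp (-μ²/(a + 2σ²))`.
-/

open MeasureTheory ProbabilityTheory Real Set Filter Topology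
open scoped NNReal

noncomputable def gaussQ (x : ℝ) : ℝ :=
  ∫ t in Set.Ioi x, (1 / Real.sqrt (2*π)) * Real.exp (-t^2/2)

theorem integral_zero_pi_div_two_eq_integral_neg_one_one (g : ℝ → ℝ) :
    (1/π) * ∫ ϑ in (0:ℝ)..(π/2), g ϑ
      = (1/4) * ∫ φ in (-1:ℝ)..1, g (π/4 * φ + π/4) := by
  rw [intervalIntegral.integral_comp_mul_add g (by positivity) (π/4), smul_eq_mul, ← mul_assoc]
  ring_nf

theorem exp_neg_sq_div_le_one (r : ℝ) {a : ℝ} (ha : 0 ≤ a) : exp (-r^2/a) ≤ 1 :=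
  exp_le_one_iff.mpr (div_nonpos_of_nonpos_of_nonneg (neg_nonpos.mpr (sq_nonneg r)) ha)

theorem integral_exp_neg_sq_div_two : ∫ s : ℝ, exp (-s^2/2) = √(2*π) := by
  simpa [div_eq_inv_mul, neg_div, mul_comm] using integral_gaussian (1/2)

theorem integral_Ioi_mul_exp_neg_sq_div_two (b : ℝ) :
    ∫ ρ in Ioi b, ρ * exp (-ρ^2/2) = exp (-b^2/2) := by
  have hderiv (ρ : ℝ) : HasDerivAt (fun ρ ↦ -exp (-ρ^2/2)) (ρ * exp (-ρ^2/2)) ρ := by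
    have h : HasDerivAt (fun ρ : ℝ ↦ -ρ^2/2) (-ρ) ρ := by
      simpa using ((hasDerivAt_pow 2 ρ).neg.div_const 2).congr_deriv (by ring : _ = -ρ)
    exact h.exp.neg.congr_deriv (by ring)
  have hint : IntegrableOn (fun ρ : ℝ ↦ ρ * exp (-ρ^2/2)) (Ioi b) := by
    simpa [div_eq_inv_mul, neg_div, mul_comm] using
      (integrable_mul_exp_neg_mul_sq (by norm_num : (0:ℝ) < 1/2)).integrableOn
  have hlim : Tendsto (fun ρ : ℝ ↦ -exp (-ρ^2/2)) atTop (𝓝 0) := by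
    have hsq : Tendsto (fun ρ : ℝ ↦ ρ^2/2) atTop atTop :=
      (tendsto_pow_atTop two_ne_zero).atTop_div_const two_pos
    simpa [Function.comp_def, neg_div] using (tendsto_exp_neg_atTop_nhds_zero.comp hsq).neg
  simpa using integral_Ioi_of_hasDerivAt_of_tendsto' (fun ρ _ ↦ hderiv ρ) hint hlim

theorem gaussQ_eq_integral_indicator_mul_exp (x : ℝ) :
    gaussQ x
      = (2*π)⁻¹ * ∫ p : ℝ × ℝ, (Ioi x).indicator 1 p.2 * exp (-(p.1^2 + p.2^2)/2) := by
  set φ : ℝ → ℝ := fun t ↦ 1 / √(2*π) * exp (-t^2/2)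
  have hφ : ∫ t, φ t = 1 := by
    rw [integral_const_mul, integral_exp_neg_sq_div_two, one_div, inv_mul_cancel₀ (by positivity)]
  calc gaussQ x = (∫ t, φ t) * ∫ t, (Ioi x).indicator φ t := by
        rw [hφ, one_mul, integral_indicator measurableSet_Ioi]; rfl
    _ = ∫ p : ℝ × ℝ, φ p.1 * (Ioi x).indicator φ p.2 := by
        rw [Measure.volume_eq_prod, integral_prod_mul]
    _ = _ := by
        rw [← integral_const_mul]
        congr 1 with p
        simp only [indicator, Pi.one_apply, φ]
        split_ifs
        · rw [mul_mul_mul_comm, ← exp_add, one_div, ← mul_inv, mul_self_sqrt (by positivity)]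
          ring_nf
        · ring

theorem integral_indicator_mul_exp_eq_integral_polar (x : ℝ) :
    ∫ p : ℝ × ℝ, (Ioi x).indicator 1 p.2 * exp (-(p.1^2 + p.2^2)/2)
      = ∫ θ in Ioo (-π) π, ∫ ρ in Ioi 0,
          (Ioi x).indicator 1 (ρ * sin θ) * (ρ * exp (-ρ^2/2)) := by
  set F : ℝ × ℝ → ℝ := fun p ↦ (Ioi x).indicator 1 (p.1 * sin p.2) * (p.1 * exp (-p.1^2/2))
  have hpolar : ∫ p : ℝ × ℝ, (Ioi x).indicator 1 p.2 * exp (-(p.1^2 + p.2^2)/2)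
      = ∫ p in polarCoord.target, F p := by
    rw [← integral_comp_polarCoord_symm]
    refine setIntegral_congr_fun polarCoord.open_target.measurableSet fun p _ ↦ ?_
    have hρ : (p.1 * cos p.2)^2 + (p.1 * sin p.2)^2 = p.1^2 := by
      linear_combination p.1^2 * cos_sq_add_sin_sq p.2
    simp only [polarCoord_symm_apply, hρ, smul_eq_mul, F]
    ring
  have hF : Integrable F ((volume.restrict (Ioi 0)).prod (volume.restrict (Ioo (-π) π))) := by
    have hg : Integrable (fun ρ : ℝ ↦ ρ * exp (-ρ^2/2)) := by
      simpa [div_eq_inv_mul, neg_div, mul_comm] using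
        integrable_mul_exp_neg_mul_sq (by norm_num : (0:ℝ) < 1/2)
    have hdom : Integrable (fun p : ℝ × ℝ ↦ ‖p.1 * exp (-p.1^2/2)‖ * 1)
        ((volume.restrict (Ioi 0)).prod (volume.restrict (Ioo (-π) π))) :=
      hg.norm.restrict.mul_prod (integrable_const 1)
    have hmeas : Measurable F :=
      ((measurable_const.indicator measurableSet_Ioi).comp (by fun_prop)).mul (by fun_prop)
    refine hdom.mono' hmeas.aestronglyMeasurable (ae_of_all _ fun p ↦ ?_)
    rw [mul_one, norm_mul]
    refine mul_le_of_le_one_left (norm_nonneg _) ?_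
    simp only [indicator, Pi.one_apply]
    split_ifs <;> simp
  rw [hpolar, polarCoord_target, Measure.volume_eq_prod, ← Measure.prod_restrict,
    integral_prod_symm F hF]

theorem integral_Ioi_zero_indicator_mul_sin {x : ℝ} (hx : 0 ≤ x) (θ : ℝ) :
    ∫ ρ in Ioi 0, (Ioi x).indicator 1 (ρ * sin θ) * (ρ * exp (-ρ^2/2))
      = if 0 < sin θ then exp (-x^2/(2 * sin θ^2)) else 0 := by
  split_ifs with hθ
  · have hind (ρ : ℝ) : (Ioi x).indicator 1 (ρ * sin θ) * (ρ * exp (-ρ^2/2))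
        = (Ioi (x / sin θ)).indicator (fun ρ ↦ ρ * exp (-ρ^2/2)) ρ := by
      simp only [indicator, mem_Ioi, div_lt_iff₀ hθ, Pi.one_apply]
      split_ifs <;> ring
    simp_rw [hind]
    rw [setIntegral_indicator measurableSet_Ioi, Ioi_inter_Ioi,
      sup_eq_right.mpr (div_nonneg hx hθ.le), integral_Ioi_mul_exp_neg_sq_div_two, div_pow]
    ring_nf
  · refine setIntegral_eq_zero_of_forall_eq_zero fun ρ (hρ : 0 < ρ) ↦ ?_
    have : ρ * sin θ ∉ Ioi x := by
      rw [mem_Ioi, not_lt]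
      nlinarith
    simp [this]

theorem integral_Ioo_neg_pi_pi_ite_sin_pos (f : ℝ → ℝ) :
    ∫ θ in Ioo (-π) π, (if 0 < sin θ then f θ else 0) = ∫ θ in Ioo 0 π, f θ := by
  have hite : ∀ θ ∈ Ioo (-π) π,
      (if 0 < sin θ then f θ else 0) = (Ioo 0 π).indicator f θ := by
    rintro θ ⟨hθl, hθr⟩
    by_cases hθ : 0 < θ
    · rw [if_pos (sin_pos_of_pos_of_lt_pi hθ hθr),
        indicator_of_mem (show θ ∈ Ioo 0 π from ⟨hθ, hθr⟩)]
    · rw [if_neg (sin_nonpos_of_nonpos_of_neg_pi_le (not_lt.mp hθ) hθl.le).not_gt,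
        indicator_of_notMem fun h ↦ hθ h.1]
  rw [setIntegral_congr_fun measurableSet_Ioo hite, setIntegral_indicator measurableSet_Ioo,
    inter_eq_self_of_subset_right (Ioo_subset_Ioo_left (by linarith [pi_pos]))]

theorem integral_zero_pi_comp_sin (f : ℝ → ℝ)
    (hf : IntervalIntegrable (fun θ ↦ f (sin θ)) volume 0 (π/2)) :
    ∫ θ in (0:ℝ)..π, f (sin θ) = 2 * ∫ θ in (0:ℝ)..(π/2), f (sin θ) := by
  have hreflect : ∫ θ in (π/2)..π, f (sin θ) = ∫ θ in (0:ℝ)..(π/2), f (sin θ) := by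
    simpa [sin_pi_sub, show π - π/2 = π/2 by ring] using
      (intervalIntegral.integral_comp_sub_left (fun θ ↦ f (sin θ)) π (a := 0) (b := π/2)).symm
  have hf' : IntervalIntegrable (fun θ ↦ f (sin θ)) volume (π/2) π := by
    simpa [sin_pi_sub, show π - π/2 = π/2 by ring] using (hf.comp_sub_left π).symm
  rw [← intervalIntegral.integral_add_adjacent_intervals hf hf', hreflect, two_mul]

theorem gaussQ_eq_integral_exp_neg_sq_div_sin_sq {x : ℝ} (hx : 0 ≤ x) :
    gaussQ x = (1/π) * ∫ θ in (0:ℝ)..(π/2), exp (-x^2/(2 * sin θ^2)) := by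
  have hint : IntervalIntegrable (fun θ ↦ exp (-x^2/(2 * sin θ^2))) volume 0 (π/2) := by
    refine (intervalIntegrable_const (c := (1:ℝ))).mono_fun
      (by fun_prop : Measurable _).aestronglyMeasurable (ae_of_all _ fun θ ↦ ?_)
    simp only [norm_one, norm_of_nonneg (exp_pos _).le]
    exact exp_neg_sq_div_le_one x (by positivity)
  rw [gaussQ_eq_integral_indicator_mul_exp, integral_indicator_mul_exp_eq_integral_polar]
  simp_rw [integral_Ioi_zero_indicator_mul_sin hx]
  rw [integral_Ioo_neg_pi_pi_ite_sin_pos, ← integral_Ioc_eq_integral_Ioo,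
    ← intervalIntegral.integral_of_le pi_pos.le,
    integral_zero_pi_comp_sin (fun s ↦ exp (-x^2/(2 * s^2))) hint]
  field_simp

theorem integral_gaussQ_sqrt_sq_div (P : Measure ℝ) [IsFiniteMeasure P] {ς : ℝ}
    (hς : 0 ≤ ς) :
    ∫ r, gaussQ √(r^2/(2*ς)) ∂P
      = (1/π) * ∫ θ in (0:ℝ)..(π/2), ∫ r, exp (-r^2/(4*ς*sin θ^2)) ∂P := by
  have hcraig (r : ℝ) : gaussQ √(r^2/(2*ς))
      = (1/π) * ∫ θ in (0:ℝ)..(π/2), exp (-r^2/(4*ς*sin θ^2)) := by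
    rw [gaussQ_eq_integral_exp_neg_sq_div_sin_sq (sqrt_nonneg _), sq_sqrt (by positivity)]
    congr 2 with θ
    rw [neg_div, neg_div, div_div]
    ring_nf
  have hint : Integrable (Function.uncurry fun r θ ↦ exp (-r^2/(4*ς*sin θ^2)))
      (P.prod (volume.restrict (Ioc 0 (π/2)))) := by
    refine (integrable_const (1:ℝ)).mono' (by fun_prop : Measurable _).aestronglyMeasurable
      (ae_of_all _ fun ⟨r, θ⟩ ↦ ?_)
    rw [Function.uncurry_apply_pair, norm_of_nonneg (exp_pos _).le]
    exact exp_neg_sq_div_le_one r (by positivity)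
  simp_rw [hcraig, integral_const_mul, intervalIntegral.integral_of_le (by positivity : 0 ≤ π/2)]
  rw [integral_integral_swap hint]

theorem integral_exp_neg_sq_div_gaussianReal (μ : ℝ) (v : ℝ≥0) {a : ℝ} (ha : 0 < a) :
    ∫ r, exp (-r^2/a) ∂gaussianReal μ v = √(a/(a + 2*v)) * exp (-μ^2/(a + 2*v)) := by
  rcases eq_or_ne v 0 with rfl | hv
  · simp [gaussianReal_zero_var, div_self ha.ne']
  set A : ℝ := (a + 2*v) / (2*a*v)
  set m : ℝ := μ*a / (a + 2*v)
  -- completing the square: `-(x - μ)²/(2v) - x²/a = -μ²/(a + 2v) - A (x - m)²`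
  have hpdf (x : ℝ) : gaussianPDFReal μ v x • exp (-x^2/a)
      = ((√(2*π*v))⁻¹ * exp (-μ^2/(a + 2*v))) * exp (-A * (x - m)^2) := by
    simp only [gaussianPDFReal, smul_eq_mul, mul_assoc, ← exp_add]
    congr 2
    simp only [A, m]
    field_simp
    ring
  rw [integral_gaussianReal_eq_integral_smul hv]
  simp_rw [hpdf]
  rw [integral_const_mul, integral_sub_right_eq_self (fun y ↦ exp (-A * y^2)) m,
    integral_gaussian, mul_right_comm, ← sqrt_inv, ← sqrt_mul (by positivity)]
  congr 2
  simp only [A]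
  field_simp

theorem upep_change_of_variables_general
    (μ : ℝ) (v : NNReal) (ς : ℝ) (hς : 0 < ς) :
    (∀ g : ℝ → ℝ, IntervalIntegrable g volume 0 (π/2) →
      (1/π) * ∫ ϑ in (0:ℝ)..(π/2), g ϑ
        = (1/4) * ∫ φ in (-1:ℝ)..1, g (π/4 * φ + π/4)) ∧
    ∫ r, gaussQ (Real.sqrt (r^2 / (2*ς))) ∂(gaussianReal μ v)
      = (1/4) * ∫ φ in (-1:ℝ)..1,
          Real.sqrt (2 * ς * Real.sin (π/4 * φ + π/4) ^ 2
              / (2 * ς * Real.sin (π/4 * φ + π/4) ^ 2 + (v : ℝ)))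
            * Real.exp (-μ^2 / (4 * ς * Real.sin (π/4 * φ + π/4) ^ 2 + 2 * (v : ℝ))) := by
  refine ⟨fun g _ ↦ integral_zero_pi_div_two_eq_integral_neg_one_one g, ?_⟩
  rw [integral_gaussQ_sqrt_sq_div _ hς.le, integral_zero_pi_div_two_eq_integral_neg_one_one]
  congr 1
  refine intervalIntegral.integral_congr_ae (ae_of_all _ fun φ hφ ↦ ?_)
  rw [uIoc_of_le (by norm_num)] at hφ
  have hsin : 0 < sin (π/4 * φ + π/4) := by
    apply sin_pos_of_pos_of_lt_pi <;> nlinarith [hφ.1, hφ.2, pi_pos]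
  rw [integral_exp_neg_sq_div_gaussianReal μ v (by positivity)]
  congr 2
  rw [div_eq_div_iff (by positivity) (by positivity)]
  ring

/-- The change of variables ϑ = (π/4)φ + π/4 turns (1/π)∫_0^{π/2} g(ϑ)dϑ into
(1/4)∫_{-1}^{1} g((π/4)φ + π/4)dφ for any g integrable on [0, π/2]; in particular the
unconditional pairwise error probability E[Q(√(R²/(2ς)))] for a real Gaussian R with
mean μ_R and variance σ_R² > 0 equals the corresponding integral over [-1, 1]. -/
theorem upep_change_of_variables
    (μ : ℝ) (v : NNReal) (hv : 0 < v) (ς : ℝ) (hς : 0 < ς) :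
    (∀ g : ℝ → ℝ, IntervalIntegrable g volume 0 (π/2) →
      (1/π) * ∫ ϑ in (0:ℝ)..(π/2), g ϑ
        = (1/4) * ∫ φ in (-1:ℝ)..1, g (π/4 * φ + π/4)) ∧
    ∫ r, gaussQ (Real.sqrt (r^2 / (2*ς))) ∂(gaussianReal μ v)
      = (1/4) * ∫ φ in (-1:ℝ)..1,
          Real.sqrt (2 * ς * Real.sin (π/4 * φ + π/4) ^ 2
              / (2 * ς * Real.sin (π/4 * φ + π/4) ^ 2 + (v : ℝ)))
            * Real.exp (-μ^2 / (4 * ς * Real.sin (π/4 * φ + π/4) ^ 2 + 2 * (v : ℝ))) :=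
  upep_change_of_variables_general μ v ς hς
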